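/- arXiv:2012.14904 — 2 statements merged into one kernel-verified Lean document; each statement's English description precedes it below -/
import Mathlib

section
/- Let G_1,...,G_k be graphs on [n] and T_1,...,T_k ⊆ [n]. Then the sum of ideals J = P_{T_1}(G_1) + ... + P_{T_k}(G_k) equals (x_s, y_s : s ∈ T_1 ∪ ... ∪ T_k) + J_{H_1} + ... + J_{H_ℓ}, where H_1,...,H_ℓ are the connected components of the graph (⋃_{i=1}^k ⋃_{j=1}^{c_{G_i}(T_i)} G̃_{ij}) − ⋃_{i=1}^k T_i, with G̃_{ij} the complete graphs on the vertex sets of the connected components of G_i − T_i. -/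
/-!
The sum is generated by the variables `x_s, y_s` with `s ∈ ⋃ Tᵢ` and the binomials `f_ij` with
`i, j` in a common component of some `Gₘ - Tₘ`. A binomial `f_ij = x_i y_j - x_j y_i` having an
endpoint in `⋃ Tᵢ` already lies in the ideal of the variables, and the remaining ones are exactly
the edges of `(⋃ₘⱼ G̃ₘⱼ) - ⋃ Tᵢ`.
-/

open MvPolynomial

section Defs

variable (K : Type*) [Field K] {V : Type*} [Fintype V] [DecidableEq V]

/-- The variable `x_i`. -/
noncomputable def xv (i : V) : MvPolynomial (Fin 2 × V) K := X (0, i)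

/-- The variable `y_i`. -/
noncomputable def yv (i : V) : MvPolynomial (Fin 2 × V) K := X (1, i)

/-- The binomial `x_i y_j - x_j y_i`. -/
noncomputable def binom (i j : V) : MvPolynomial (Fin 2 × V) K :=
  xv K i * yv K j - xv K j * yv K i

/-- The binomial edge ideal `J_G` of a simple graph `G`. -/
noncomputable def beIdeal (G : SimpleGraph V) : Ideal (MvPolynomial (Fin 2 × V) K) :=
  Ideal.span { f | ∃ i j, G.Adj i j ∧ f = binom K i j }

/-- The graph `G - T`: delete the vertices of `T` (kept as isolated vertices). -/
def delV (G : SimpleGraph V) (T : Finset V) : SimpleGraph V where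
  Adj i j := G.Adj i j ∧ i ∉ T ∧ j ∉ T
  symm := ⟨fun i j h => ⟨h.1.symm, h.2.2, h.2.1⟩⟩
  loopless := ⟨fun i h => G.irrefl h.1⟩

/-- `c_G(T)`: the number of connected components of `G - T`. -/
noncomputable def cCount (G : SimpleGraph V) (T : Finset V) : ℕ :=
  Nat.card {c : (delV G T).ConnectedComponent //
    ∃ v, v ∉ T ∧ (delV G T).connectedComponentMk v = c}

/-- The prime ideal `P_T(G) = (x_i, y_i : i ∈ T) + J_{G̃₁} + ⋯ + J_{G̃_c}`,
where the `G̃ᵢ` are complete graphs on the components of `G - T`. -/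
noncomputable def PTIdeal (G : SimpleGraph V) (T : Finset V) :
    Ideal (MvPolynomial (Fin 2 × V) K) :=
  Ideal.span ({ f | ∃ i ∈ T, f = xv K i ∨ f = yv K i } ∪
    { f | ∃ i j, i ∉ T ∧ j ∉ T ∧ i ≠ j ∧ (delV G T).Reachable i j ∧ f = binom K i j })

/-- `T` has the cut point property for `G`. -/
def hasCutPointProperty (G : SimpleGraph V) (T : Finset V) : Prop :=
  ∀ i ∈ T, cCount G (T.erase i) < cCount G T

/-- The height of an ideal: the infimum of the heights of the primes containing it. -/
noncomputable def idealHeight {R : Type*} [CommRing R] (I : Ideal R) : ℕ∞ :=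
  ⨅ P : {P : PrimeSpectrum R // I ≤ P.asIdeal}, Order.height P.1

end Defs

/-- The union of the complete graphs on the vertex sets of the connected components
of the graphs `G i - T i`. -/
def unionCompletedComps {n k : ℕ} (G : Fin k → SimpleGraph (Fin n))
    (T : Fin k → Finset (Fin n)) : SimpleGraph (Fin n) where
  Adj i j := i ≠ j ∧ ∃ m, i ∉ T m ∧ j ∉ T m ∧ (delV (G m) (T m)).Reachable i j
  symm := ⟨fun i j ⟨hij, m, hi, hj, h⟩ => ⟨hij.symm, m, hj, hi, h.symm⟩⟩
  loopless := ⟨fun i h => h.1 rfl⟩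

section BinomialEdgeIdeal

variable {K : Type*} [Field K] {V : Type*}

theorem binom_anticomm (i j : V) : binom K j i = -binom K i j := by
  unfold binom; ring

theorem binom_mem_of_left {I : Ideal (MvPolynomial (Fin 2 × V) K)} {i : V}
    (hx : xv K i ∈ I) (hy : yv K i ∈ I) (j : V) : binom K i j ∈ I :=
  I.sub_mem (I.mul_mem_right _ hx) (I.mul_mem_left _ hy)

theorem binom_mem_of_right {I : Ideal (MvPolynomial (Fin 2 × V) K)} {j : V}
    (hx : xv K j ∈ I) (hy : yv K j ∈ I) (i : V) : binom K i j ∈ I := by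
  rw [← neg_neg (binom K i j), ← binom_anticomm]
  exact I.neg_mem (binom_mem_of_left hx hy i)

theorem beIdeal_le_iff {G : SimpleGraph V} {I : Ideal (MvPolynomial (Fin 2 × V) K)} :
    beIdeal K G ≤ I ↔ ∀ i j, G.Adj i j → binom K i j ∈ I := by
  rw [beIdeal, Ideal.span_le]
  exact ⟨fun h i j hij => h ⟨i, j, hij, rfl⟩, by rintro h f ⟨i, j, hij, rfl⟩; exact h i j hij⟩

theorem PTIdeal_le_iff {G : SimpleGraph V} {T : Finset V}
    {I : Ideal (MvPolynomial (Fin 2 × V) K)} :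
    PTIdeal K G T ≤ I ↔ (∀ i ∈ T, xv K i ∈ I ∧ yv K i ∈ I) ∧
      ∀ i j, i ∉ T → j ∉ T → i ≠ j → (delV G T).Reachable i j → binom K i j ∈ I := by
  rw [PTIdeal, Ideal.span_le, Set.union_subset_iff]
  refine and_congr ⟨?_, ?_⟩ ⟨?_, ?_⟩
  · intro h i hi
    exact ⟨h ⟨i, hi, .inl rfl⟩, h ⟨i, hi, .inr rfl⟩⟩
  · rintro h f ⟨i, hi, rfl | rfl⟩
    exacts [(h i hi).1, (h i hi).2]
  · intro h i j hi hj hij hr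
    exact h ⟨i, j, hi, hj, hij, hr, rfl⟩
  · rintro h f ⟨i, j, hi, hj, hij, hr, rfl⟩
    exact h i j hi hj hij hr

end BinomialEdgeIdeal

/-- `P_{T₁}(G₁) + ⋯ + P_{T_k}(G_k) = (x_s, y_s : s ∈ ⋃ Tᵢ) + J_{H₁} + ⋯ + J_{H_ℓ}`,
where `H₁, …, H_ℓ` are the connected components of `(⋃ᵢⱼ G̃ᵢⱼ) - ⋃ᵢ Tᵢ`
(so their binomial edge ideals sum to the binomial edge ideal of that graph). -/
theorem sum_PTIdeal_eq (K : Type*) [Field K] (n k : ℕ) (G : Fin k → SimpleGraph (Fin n))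
    (T : Fin k → Finset (Fin n)) :
    (∑ i, PTIdeal K (G i) (T i)) =
      Ideal.span { f | ∃ s, (∃ i, s ∈ T i) ∧ (f = xv K s ∨ f = yv K s) } +
        beIdeal K (delV (unionCompletedComps G T) (Finset.univ.biUnion T)) := by
  set varIdeal := Ideal.span { f | ∃ s, (∃ i, s ∈ T i) ∧ (f = xv K s ∨ f = yv K s) }
  have var_mem {s : Fin n} (hs : ∃ i, s ∈ T i) : xv K s ∈ varIdeal ∧ yv K s ∈ varIdeal :=
    ⟨Ideal.subset_span ⟨s, hs, .inl rfl⟩, Ideal.subset_span ⟨s, hs, .inr rfl⟩⟩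
  have PTIdeal_le_sum (m : Fin k) : PTIdeal K (G m) (T m) ≤ ∑ i, PTIdeal K (G i) (T i) :=
    Finset.single_le_sum (f := fun i => PTIdeal K (G i) (T i)) (fun _ _ => zero_le)
      (Finset.mem_univ m)
  apply le_antisymm
  · rw [Ideal.sum_eq_sup, Finset.sup_le_iff]
    intro m _
    refine PTIdeal_le_iff.2 ⟨fun s hs => ?_, fun i j hi hj hij hr => ?_⟩
    · exact ⟨Ideal.mem_sup_left (var_mem ⟨m, hs⟩).1, Ideal.mem_sup_left (var_mem ⟨m, hs⟩).2⟩
    by_cases hiU : ∃ l, i ∈ T l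
    · exact Ideal.mem_sup_left (binom_mem_of_left (var_mem hiU).1 (var_mem hiU).2 j)
    by_cases hjU : ∃ l, j ∈ T l
    · exact Ideal.mem_sup_left (binom_mem_of_right (var_mem hjU).1 (var_mem hjU).2 i)
    refine Ideal.mem_sup_right (Ideal.subset_span ⟨i, j, ⟨⟨hij, m, hi, hj, hr⟩, ?_, ?_⟩, rfl⟩)
    exacts [by simpa using hiU, by simpa using hjU]
  · refine sup_le (Ideal.span_le.2 ?_) (beIdeal_le_iff.2 ?_)
    · rintro f ⟨s, ⟨m, hs⟩, hf⟩
      exact PTIdeal_le_sum m (Ideal.subset_span (.inl ⟨s, hs, hf⟩))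
    · rintro i j ⟨⟨hij, m, hi, hj, hr⟩, -, -⟩
      exact (PTIdeal_le_iff.1 (PTIdeal_le_sum m)).2 i j hi hj hij hr
end

section
/- Let G be a graph on [n] with connected components G_1,...,G_r of sizes n_1,...,n_r, let H be a graph on [n] each of whose connected components is contained in some G_i, and let T ⊆ [n]. Then P_T(H) + P_∅(G) = (x_i, y_i : i ∈ T) + Σ_{i=1}^r J_{K_{V(G_i)} − T}, which equals P_T(K_{V(G_1)} ∪ ... ∪ K_{V(G_r)}) and is a prime ideal. -/
/-!
Since every component of `H - T` lies in a component of `G`, each generator of `P_T(H)` is a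
variable indexed by `T` or a binomial `x_i y_j - x_j y_i` with `i, j` in one component of `G`.
So the sum is generated by the variables indexed by `T` and all such binomials, and only pairs of
distinct vertices outside `T` matter, which also identifies it with `P_T(K_{V(G₁)} ∪ ⋯ ∪ K_{V(G_r)})`.

For primality, the ideal is the kernel of the monomial map `x_i ↦ s_{c i} t_i`, `y_i ↦ u_{c i} t_i`
for `i ∉ T` and `x_i, y_i ↦ 0` for `i ∈ T`, where `c i` is the component of `i`. The kernel of such
a map is spanned by the monomials it kills and the differences of monomials with equal images. Two
monomials with equal images have the same degree at each vertex and the same number of `x`'s in each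
component, so they are linked by exchanges `x_i y_j ↝ x_j y_i` inside one component, each a
multiple of a generator.
-/

open MvPolynomial

/-- The disjoint union of the complete graphs on the vertex sets of the connected
components of `G`, i.e. `K_{V(G₁)} ∪ ⋯ ∪ K_{V(G_r)}`. -/
def completedComps {n : ℕ} (G : SimpleGraph (Fin n)) : SimpleGraph (Fin n) where
  Adj i j := i ≠ j ∧ G.Reachable i j
  symm := ⟨fun i j ⟨hij, h⟩ => ⟨hij.symm, h.symm⟩⟩
  loopless := ⟨fun i h => h.1 rfl⟩

section VarBinomIdeal

variable (K : Type*) [Field K] {V : Type*}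

noncomputable def varBinomIdeal (T : Finset V) (r : V → V → Prop) : Ideal (MvPolynomial (Fin 2 × V) K) :=
  Ideal.span ({ f | ∃ i ∈ T, f = xv K i ∨ f = yv K i } ∪ { f | ∃ i j, r i j ∧ f = binom K i j })

variable {K} {T : Finset V} {r r' : V → V → Prop}

theorem xv_mem_varBinomIdeal {i : V} (hi : i ∈ T) : xv K i ∈ varBinomIdeal K T r :=
  Ideal.subset_span (Or.inl ⟨i, hi, Or.inl rfl⟩)

theorem yv_mem_varBinomIdeal {i : V} (hi : i ∈ T) : yv K i ∈ varBinomIdeal K T r :=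
  Ideal.subset_span (Or.inl ⟨i, hi, Or.inr rfl⟩)

theorem X_mem_varBinomIdeal {p : Fin 2 × V} (hp : p.2 ∈ T) :
    (X p : MvPolynomial (Fin 2 × V) K) ∈ varBinomIdeal K T r := by
  obtain ⟨s, i⟩ := p
  fin_cases s
  exacts [xv_mem_varBinomIdeal hp, yv_mem_varBinomIdeal hp]

theorem binom_mem_varBinomIdeal {i j : V} (h : r i j) : binom K i j ∈ varBinomIdeal K T r :=
  Ideal.subset_span (Or.inr ⟨i, j, h, rfl⟩)

variable (K) in
theorem span_restrict_eq_varBinomIdeal (T : Finset V) (r : V → V → Prop) :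
    Ideal.span ({ f | ∃ i ∈ T, f = xv K i ∨ f = yv K i } ∪
      { f | ∃ i j, i ∉ T ∧ j ∉ T ∧ i ≠ j ∧ r i j ∧ f = binom K i j }) = varBinomIdeal K T r := by
  set J := Ideal.span ({ f | ∃ i ∈ T, f = xv K i ∨ f = yv K i } ∪
      { f | ∃ i j, i ∉ T ∧ j ∉ T ∧ i ≠ j ∧ r i j ∧ f = binom K i j })
  have hx {i : V} (hi : i ∈ T) : xv K i ∈ J := Ideal.subset_span (Or.inl ⟨i, hi, Or.inl rfl⟩)
  have hy {i : V} (hi : i ∈ T) : yv K i ∈ J := Ideal.subset_span (Or.inl ⟨i, hi, Or.inr rfl⟩)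
  refine le_antisymm (Ideal.span_mono ?_) (Ideal.span_le.2 fun f hf => SetLike.mem_coe.2 ?_)
  · rintro f (hf | ⟨i, j, -, -, -, hr, rfl⟩)
    exacts [Or.inl hf, Or.inr ⟨i, j, hr, rfl⟩]
  rcases hf with hf | ⟨i, j, hr, rfl⟩
  · exact Ideal.subset_span (Or.inl hf)
  by_cases hi : i ∈ T
  · exact sub_mem (Ideal.mul_mem_right _ _ (hx hi)) (Ideal.mul_mem_left _ _ (hy hi))
  by_cases hj : j ∈ T
  · exact sub_mem (Ideal.mul_mem_left _ _ (hy hj)) (Ideal.mul_mem_right _ _ (hx hj))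
  rcases eq_or_ne i j with rfl | hij
  · rw [binom, sub_self]; exact zero_mem _
  exact Ideal.subset_span (Or.inr ⟨i, j, hi, hj, hij, hr, rfl⟩)

theorem varBinomIdeal_mono (h : ∀ i ∉ T, ∀ j ∉ T, r i j → r' i j) :
    varBinomIdeal K T r ≤ varBinomIdeal K T r' := by
  rw [← span_restrict_eq_varBinomIdeal, ← span_restrict_eq_varBinomIdeal]
  refine Ideal.span_mono ?_
  rintro f (hf | ⟨i, j, hi, hj, hij, hr, rfl⟩)
  exacts [Or.inl hf, Or.inr ⟨i, j, hi, hj, hij, h i hi j hj hr, rfl⟩]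

theorem varBinomIdeal_congr (h : ∀ i ∉ T, ∀ j ∉ T, r i j ↔ r' i j) :
    varBinomIdeal K T r = varBinomIdeal K T r' :=
  le_antisymm (varBinomIdeal_mono fun i hi j hj => (h i hi j hj).1)
    (varBinomIdeal_mono fun i hi j hj => (h i hi j hj).2)

theorem varBinomIdeal_sup_of_le (h : r ≤ r') :
    varBinomIdeal K T r ⊔ varBinomIdeal K ∅ r' = varBinomIdeal K T r' := by
  refine le_antisymm (sup_le (Ideal.span_mono ?_) (Ideal.span_mono ?_)) (Ideal.span_le.2 ?_)
  · rintro f (hf | ⟨i, j, hr, rfl⟩)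
    exacts [Or.inl hf, Or.inr ⟨i, j, h i j hr, rfl⟩]
  · rintro f (⟨i, hi, -⟩ | hf)
    exacts [absurd hi (Finset.notMem_empty i), Or.inr hf]
  rintro f (⟨i, hi, rfl | rfl⟩ | ⟨i, j, hr, rfl⟩)
  · exact Ideal.mem_sup_left (xv_mem_varBinomIdeal hi)
  · exact Ideal.mem_sup_left (yv_mem_varBinomIdeal hi)
  · exact Ideal.mem_sup_right (binom_mem_varBinomIdeal hr)

theorem PTIdeal_eq_varBinomIdeal (G : SimpleGraph V) (T : Finset V) :
    PTIdeal K G T = varBinomIdeal K T (delV G T).Reachable :=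
  span_restrict_eq_varBinomIdeal K T _

end VarBinomIdeal

theorem delV_empty {V : Type*} (G : SimpleGraph V) : delV G ∅ = G := by
  ext; simp [delV]

theorem delV_le {V : Type*} (G : SimpleGraph V) (T : Finset V) : delV G T ≤ G :=
  fun _ _ h => h.1

theorem reachable_completedComps {n : ℕ} {G : SimpleGraph (Fin n)} {i j : Fin n} :
    (completedComps G).Reachable i j ↔ G.Reachable i j := by
  have h : (completedComps G).Adj ≤ Relation.ReflTransGen G.Adj := fun a b hab => by
    rw [← SimpleGraph.reachable_eq_reflTransGen]; exact hab.2
  rw [SimpleGraph.reachable_eq_reflTransGen, SimpleGraph.reachable_eq_reflTransGen]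
  refine ⟨fun hr => Relation.reflTransGen_eq_self.le _ _ (Relation.ReflTransGen.mono h _ _ hr),
    Relation.ReflTransGen.mono (fun a b hab => ⟨hab.ne, hab.reachable⟩) _ _⟩

theorem reachable_delV_completedComps {n : ℕ} {G : SimpleGraph (Fin n)} {T : Finset (Fin n)}
    {i j : Fin n} (hi : i ∉ T) (hj : j ∉ T) :
    (delV (completedComps G) T).Reachable i j ↔ G.Reachable i j := by
  refine ⟨fun h => reachable_completedComps.1 (h.mono (delV_le _ T)), fun h => ?_⟩
  rcases eq_or_ne i j with rfl | hij
  · rfl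
  exact SimpleGraph.Adj.reachable ⟨⟨hij, h⟩, hi, hj⟩

section MonomialMap

variable {R σ τ : Type*} [CommRing R]

theorem mem_of_map_eq_zero_of_map_monomial (φ : MvPolynomial σ R →+ MvPolynomial τ R)
    {I : Ideal (MvPolynomial σ R)} (Z : Set (σ →₀ ℕ)) (M : (σ →₀ ℕ) → (τ →₀ ℕ))
    (hφZ : ∀ d ∈ Z, ∀ a, φ (monomial d a) = 0)
    (hφM : ∀ d ∉ Z, ∀ a, φ (monomial d a) = monomial (M d) a)
    (hZ : ∀ d ∈ Z, monomial d 1 ∈ I)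
    (hM : ∀ d ∉ Z, ∀ e ∉ Z, M d = M e → monomial d 1 - monomial e 1 ∈ I)
    {f : MvPolynomial σ R} (hf : φ f = 0) : f ∈ I := by
  classical
  -- `L ∘ φ` replaces each monomial outside `Z` by a fixed monomial with the same image under `M`
  let s : (τ →₀ ℕ) → (σ →₀ ℕ) := fun μ => if h : ∃ e ∉ Z, M e = μ then h.choose else 0
  let L : MvPolynomial τ R →+ MvPolynomial σ R :=
    AddMonoidHom.mk' (AddMonoidAlgebra.mapDomain s) (AddMonoidAlgebra.mapDomain_add s)
  suffices ∀ g, g - L (φ g) ∈ I by simpa [hf] using this f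
  intro g
  induction g using MvPolynomial.induction_on' with
  | monomial d a =>
    by_cases hd : d ∈ Z
    · rw [hφZ d hd, map_zero, sub_zero, ← mul_one a, ← C_mul_monomial]
      exact Ideal.mul_mem_left _ _ (hZ d hd)
    · have he : ∃ e ∉ Z, M e = M d := ⟨d, hd, rfl⟩
      have hLd : L (monomial (M d) a) = monomial he.choose a := by
        rw [AddMonoidHom.mk'_apply, ← single_eq_monomial, AddMonoidAlgebra.mapDomain_single]
        simp only [s, dif_pos he]
        rfl
      rw [hφM d hd, hLd, ← mul_one a, ← C_mul_monomial, ← C_mul_monomial, ← mul_sub]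
      exact Ideal.mul_mem_left _ _ (hM d hd _ he.choose_spec.1 he.choose_spec.2.symm)
  | add p q hp hq =>
    rw [map_add, map_add, add_sub_add_comm]
    exact add_mem hp hq

end MonomialMap

theorem Finsupp.exists_eq_add_single_add_single {α : Type*} {d : α →₀ ℕ} {p q : α} (hpq : p ≠ q)
    (hp : 0 < d p) (hq : 0 < d q) : ∃ a, d = a + single p 1 + single q 1 := by
  classical
  refine ⟨d - single p 1 - single q 1, Finsupp.ext fun r => ?_⟩
  simp only [Finsupp.add_apply, Finsupp.tsub_apply, Finsupp.single_apply]
  split_ifs <;> subst_vars <;> first | exact (hpq rfl).elim | omega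

section BlockExponent

variable {V ι : Type*} (c : V → ι)

noncomputable def blockExponent (d : (Fin 2 × V) →₀ ℕ) : ((Fin 2 × ι) ⊕ V) →₀ ℕ :=
  d.mapDomain (fun p => .inl (p.1, c p.2)) + d.mapDomain (fun p => .inr p.2)

variable {c}

theorem blockExponent_apply_inr (d : (Fin 2 × V) →₀ ℕ) (i : V) :
    blockExponent c d (.inr i) = d (0, i) + d (1, i) := by
  induction d using Finsupp.induction_linear with
  | zero => simp [blockExponent]
  | add d e hd he =>
    simp only [blockExponent, Finsupp.mapDomain_add, Finsupp.add_apply] at hd he ⊢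
    omega
  | single p k =>
    obtain ⟨s, j⟩ := p
    fin_cases s <;> by_cases hj : j = i <;> simp [blockExponent, hj]

theorem blockExponent_apply_inl [Fintype V] [DecidableEq ι] (d : (Fin 2 × V) →₀ ℕ) (s : Fin 2)
    (k : ι) : blockExponent c d (.inl (s, k)) = ∑ i with c i = k, d (s, i) := by
  classical
  induction d using Finsupp.induction_linear with
  | zero => simp [blockExponent]
  | add d e hd he =>
    simp only [blockExponent, Finsupp.mapDomain_add, Finsupp.add_apply] at hd he ⊢
    rw [Finset.sum_add_distrib]
    omega
  | single p m =>
    obtain ⟨t, j⟩ := p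
    by_cases ht : t = s <;> simp [blockExponent, Finsupp.single_apply, Prod.ext_iff, ht]

variable [Fintype V] {d e : (Fin 2 × V) →₀ ℕ}

theorem exists_lt_of_blockExponent_eq (h : blockExponent c d = blockExponent c e) {i : V}
    (hi : e (0, i) < d (0, i)) : ∃ j, c j = c i ∧ d (0, j) < e (0, j) := by
  classical
  by_contra! hle
  have hsum := congr($h (.inl (0, c i)))
  rw [blockExponent_apply_inl, blockExponent_apply_inl] at hsum
  exact hsum.not_gt <| Finset.sum_lt_sum (fun j hj => hle j (Finset.mem_filter.1 hj).2)
    ⟨i, Finset.mem_filter.2 ⟨Finset.mem_univ i, rfl⟩, hi⟩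

theorem eq_of_blockExponent_eq_of_le (h : blockExponent c d = blockExponent c e)
    (hle : ∀ i, d (0, i) ≤ e (0, i)) : d = e := by
  classical
  have hx (i : V) : d (0, i) = e (0, i) := by
    have hsum := congr($h (.inl (0, c i)))
    rw [blockExponent_apply_inl, blockExponent_apply_inl,
      Finset.sum_eq_sum_iff_of_le fun j _ => hle j] at hsum
    exact hsum i (Finset.mem_filter.2 ⟨Finset.mem_univ i, rfl⟩)
  ext ⟨s, i⟩
  have hrow := congr($h (.inr i))
  rw [blockExponent_apply_inr, blockExponent_apply_inr, hx i] at hrow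
  fin_cases s
  · exact hx i
  · exact Nat.add_left_cancel hrow

end BlockExponent

section Exchange

variable {V : Type*}

theorem add_single_add_single_apply_zero [DecidableEq V] (a : (Fin 2 × V) →₀ ℕ) (i j k : V) :
    (a + Finsupp.single (0, i) 1 + Finsupp.single (1, j) 1 : (Fin 2 × V) →₀ ℕ) (0, k) =
      a (0, k) + if i = k then 1 else 0 := by
  simp [Finsupp.single_apply]

def xExcess [Fintype V] (d e : (Fin 2 × V) →₀ ℕ) : ℕ := ∑ k, (d (0, k) - e (0, k))

theorem xExcess_swap_lt [Fintype V] (a e : (Fin 2 × V) →₀ ℕ) {i j : V}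
    (hi : e (0, i) < (a + Finsupp.single (0, i) 1 + Finsupp.single (1, j) 1 : _ →₀ ℕ) (0, i))
    (hj : (a + Finsupp.single (0, i) 1 + Finsupp.single (1, j) 1 : _ →₀ ℕ) (0, j) < e (0, j)) :
    xExcess (a + Finsupp.single (0, j) 1 + Finsupp.single (1, i) 1) e <
      xExcess (a + Finsupp.single (0, i) 1 + Finsupp.single (1, j) 1) e := by
  classical
  simp only [xExcess, add_single_add_single_apply_zero] at hi hj ⊢
  simp only [↓reduceIte] at hi
  have hij : i ≠ j := by rintro rfl; simp only [↓reduceIte] at hj; omega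
  simp only [if_neg hij] at hj
  refine Finset.sum_lt_sum (fun k _ => ?_) ⟨i, Finset.mem_univ i, ?_⟩ <;>
    split_ifs <;> subst_vars <;> first | exact absurd rfl ‹¬_ = _› | omega

variable (K : Type*) [Field K] {ι : Type*} [Fintype V] {c : V → ι}

theorem monomial_sub_mem_of_blockExponent_eq {I : Ideal (MvPolynomial (Fin 2 × V) K)}
    (hI : ∀ i j, c i = c j → binom K i j ∈ I) (d e : (Fin 2 × V) →₀ ℕ)
    (h : blockExponent c d = blockExponent c e) : monomial d (1 : K) - monomial e 1 ∈ I := by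
  classical
  by_cases hle : ∀ i, d (0, i) ≤ e (0, i)
  · rw [eq_of_blockExponent_eq_of_le h hle, sub_self]
    exact zero_mem I
  obtain ⟨i, hi⟩ : ∃ i, e (0, i) < d (0, i) := by simpa using hle
  obtain ⟨j, hji, hj⟩ := exists_lt_of_blockExponent_eq h hi
  have hdj : 0 < d (1, j) := by
    have hrow := congr($h (.inr j))
    rw [blockExponent_apply_inr, blockExponent_apply_inr] at hrow
    omega
  obtain ⟨a, rfl⟩ := Finsupp.exists_eq_add_single_add_single (p := (0, i)) (q := (1, j)) (by simp)
    (by omega) hdj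
  -- exchange `x_i y_j` for `x_j y_i`, which lowers the excess of `d` over `e` in the `x`-row
  set d' := a + Finsupp.single (0, j) 1 + Finsupp.single (1, i) 1
  have hswap : monomial (a + Finsupp.single (0, i) 1 + Finsupp.single (1, j) 1) (1 : K)
      - monomial d' 1 = monomial a 1 * binom K i j := by
    simp only [d', monomial_add_single, pow_one, binom, xv, yv]
    ring
  have hd' : blockExponent c d' = blockExponent c e := by
    rw [← h]
    simp only [d', blockExponent, Finsupp.mapDomain_add, Finsupp.mapDomain_single, hji]
    abel
  rw [← sub_add_sub_cancel _ (monomial d' 1), hswap]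
  exact add_mem (Ideal.mul_mem_left _ _ (hI i j hji.symm))
    (monomial_sub_mem_of_blockExponent_eq hI d' e hd')
termination_by xExcess d e
decreasing_by
  subst_vars
  exact xExcess_swap_lt a e hi hj

end Exchange

section BlockMap

variable (K : Type*) [Field K] {V ι : Type*} [DecidableEq V] (c : V → ι) (T : Finset V)

/-- Writing `s_k, u_k` for `X (inl (0, k)), X (inl (1, k))` and `t_i` for `X (inr i)`, this is
`x_i ↦ s_{c i} t_i`, `y_i ↦ u_{c i} t_i` for `i ∉ T`, and `x_i, y_i ↦ 0` for `i ∈ T`. -/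
noncomputable def blockMap : MvPolynomial (Fin 2 × V) K →ₐ[K] MvPolynomial ((Fin 2 × ι) ⊕ V) K :=
  aeval fun p => if p.2 ∈ T then 0 else X (.inl (p.1, c p.2)) * X (.inr p.2)

theorem blockMap_monomial_of_mem {d : (Fin 2 × V) →₀ ℕ} {p : Fin 2 × V} (hp : p ∈ d.support)
    (hpT : p.2 ∈ T) (a : K) : blockMap K c T (monomial d a) = 0 := by
  rw [blockMap, aeval_monomial, Finsupp.prod, Finset.prod_eq_zero hp, mul_zero]
  rw [if_pos hpT, zero_pow (Finsupp.mem_support_iff.1 hp)]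

theorem blockMap_monomial {d : (Fin 2 × V) →₀ ℕ} (hd : ∀ p ∈ d.support, p.2 ∉ T) (a : K) :
    blockMap K c T (monomial d a) = monomial (blockExponent c d) a := by
  have hprod : (d.prod fun p k =>
      ((if p.2 ∈ T then 0 else X (.inl (p.1, c p.2)) * X (.inr p.2)) ^ k :
        MvPolynomial ((Fin 2 × ι) ⊕ V) K)) =
      d.prod fun p k => monomial (.single (.inl (p.1, c p.2)) k + .single (.inr p.2) k) 1 :=
    Finsupp.prod_congr fun p hp => by
      rw [if_neg (hd p hp), mul_pow, X_pow_eq_monomial, X_pow_eq_monomial, monomial_mul, mul_one]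
  rw [blockMap, aeval_monomial, algebraMap_eq, hprod, ← monomial_finsupp_sum_index, blockExponent,
    Finsupp.mapDomain, Finsupp.mapDomain, ← Finsupp.sum_add]

theorem varBinomIdeal_le_ker_blockMap :
    varBinomIdeal K T (fun i j => c i = c j) ≤ RingHom.ker (blockMap K c T) := by
  refine Ideal.span_le.2 ?_
  rintro f (⟨i, hi, rfl | rfl⟩ | ⟨i, j, hij, rfl⟩) <;>
    simp only [SetLike.mem_coe, RingHom.mem_ker, blockMap, binom, xv, yv, map_sub, map_mul,
      aeval_X]
  · rw [if_pos hi]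
  · rw [if_pos hi]
  · rw [hij]
    by_cases hi : i ∈ T <;> by_cases hj : j ∈ T <;> simp only [hi, hj, if_true, if_false] <;> ring

theorem ker_blockMap_le_varBinomIdeal [Fintype V] :
    RingHom.ker (blockMap K c T) ≤ varBinomIdeal K T (fun i j => c i = c j) := by
  intro f hf
  refine mem_of_map_eq_zero_of_map_monomial (blockMap K c T).toAddMonoidHom
    {d | ∃ p ∈ d.support, p.2 ∈ T} (blockExponent c) ?_ ?_ ?_ ?_ hf
  · rintro d ⟨p, hp, hpT⟩ a
    exact blockMap_monomial_of_mem K c T hp hpT a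
  · intro d hd a
    exact blockMap_monomial K c T (fun p hp hpT => hd ⟨p, hp, hpT⟩) a
  · rintro d ⟨p, hp, hpT⟩
    exact Ideal.mem_of_dvd _ (X_dvd_monomial.2 (.inr (Finsupp.mem_support_iff.1 hp)))
      (X_mem_varBinomIdeal hpT)
  · exact fun d _ e _ => monomial_sub_mem_of_blockExponent_eq K
      (fun i j hij => binom_mem_varBinomIdeal hij) d e

theorem varBinomIdeal_isPrime [Fintype V] : (varBinomIdeal K T (fun i j => c i = c j)).IsPrime := by
  rw [le_antisymm (varBinomIdeal_le_ker_blockMap K c T) (ker_blockMap_le_varBinomIdeal K c T)]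
  exact RingHom.ker_isPrime _

end BlockMap

/-- If every connected component of `H` is contained in a connected
component of `G` (i.e. `H`-reachability implies `G`-reachability), then
`P_T(H) + P_∅(G) = (x_i, y_i : i ∈ T) + Σᵢ J_{K_{V(Gᵢ)} - T} = P_T(K_{V(G₁)} ∪ ⋯ ∪ K_{V(G_r)})`,
and this ideal is prime. -/
theorem PTIdeal_add_Pempty (K : Type*) [Field K] (n : ℕ) (G H : SimpleGraph (Fin n))
    (T : Finset (Fin n)) (hH : ∀ i j : Fin n, H.Reachable i j → G.Reachable i j) :
    PTIdeal K H T + PTIdeal K G ∅ =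
        Ideal.span ({ f | ∃ i ∈ T, f = xv K i ∨ f = yv K i } ∪
          { f | ∃ i j, i ∉ T ∧ j ∉ T ∧ i ≠ j ∧ G.Reachable i j ∧ f = binom K i j }) ∧
      PTIdeal K H T + PTIdeal K G ∅ = PTIdeal K (completedComps G) T ∧
      (PTIdeal K H T + PTIdeal K G ∅).IsPrime := by
  have hsum : PTIdeal K H T + PTIdeal K G ∅ = varBinomIdeal K T G.Reachable := by
    rw [PTIdeal_eq_varBinomIdeal, PTIdeal_eq_varBinomIdeal, delV_empty, Submodule.add_eq_sup]
    exact varBinomIdeal_sup_of_le fun i j h => hH i j (h.mono (delV_le H T))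
  have hcomp : G.Reachable = fun i j => G.connectedComponentMk i = G.connectedComponentMk j := by
    ext i j
    exact SimpleGraph.ConnectedComponent.eq.symm
  refine ⟨hsum.trans (span_restrict_eq_varBinomIdeal K T _).symm, ?_, ?_⟩
  · rw [hsum, PTIdeal_eq_varBinomIdeal]
    exact varBinomIdeal_congr fun i hi j hj => (reachable_delV_completedComps hi hj).symm
  · rw [hsum, hcomp]
    exact varBinomIdeal_isPrime K _ T
end
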